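/- Suppose K_{8k} has an odd cover by 4k complete bipartite graphs with parts (A_j, B_j), 1 ≤ j ≤ 4k, where the vertex set is partitioned for each j as A_j ∪ B_j ∪ C_j with |C_j| arising from a vector construction as in Buchanan et al. Then adding one new vertex v and taking the 4k complete 3-partite 3-graphs with parts A_j, B_j, C_j ∪ {v} yields an odd cover of K_{8k+1}^(3). In particular, for every k ≥ 1, b_3(8k+1) = 4k. -/

import Mathlib

open Finset

/-- `e` is an edge of the complete `r`-partite `r`-graph with parts `P 0, ..., P (r-1)`:
it meets every part in exactly one vertex. -/
def IsEdge {α : Type*} [DecidableEq α] {r : ℕ} (P : Fin r → Finset α) (e : Finset α) : Prop :=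
  ∀ i, (e ∩ P i).card = 1

instance {α : Type*} [DecidableEq α] {r : ℕ} (P : Fin r → Finset α) (e : Finset α) :
    Decidable (IsEdge P e) :=
  inferInstanceAs (Decidable (∀ _, _))

/-- The family `H` of complete `r`-partite `r`-graphs (each given by `r` pairwise disjoint
parts inside `V`) is an odd cover of the complete `r`-graph on `V`: every `r`-subset of `V`
is an edge of an odd number of members. -/
def IsOddCoverOn {α : Type*} [DecidableEq α] (V : Finset α) {r m : ℕ}
    (H : Fin m → Fin r → Finset α) : Prop :=
  (∀ i j, H i j ⊆ V) ∧
  (∀ i, Pairwise (Function.onFun Disjoint (H i))) ∧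
  ∀ e ⊆ V, e.card = r → Odd ((Finset.univ.filter fun i => IsEdge (H i) e)).card

/-- `oddCoverNumber r n` is the odd cover number `b_r(n)` of `K_n^(r)`. -/
noncomputable def oddCoverNumber (r n : ℕ) : ℕ :=
  sInf {m | ∃ H : Fin m → Fin r → Finset (Fin n), IsOddCoverOn Finset.univ H}


lemma isEdge3 {α : Type*} [DecidableEq α] (X Y Z : Finset α) (e : Finset α) :
    IsEdge ![X, Y, Z] e ↔ (e ∩ X).card = 1 ∧ (e ∩ Y).card = 1 ∧ (e ∩ Z).card = 1 := by
  constructor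
  · intro h; exact ⟨h 0, h 1, h 2⟩
  · rintro ⟨h1, h2, h3⟩ i; fin_cases i <;> simpa

lemma isEdge2 {α : Type*} [DecidableEq α] (X Y : Finset α) (e : Finset α) :
    IsEdge ![X, Y] e ↔ (e ∩ X).card = 1 ∧ (e ∩ Y).card = 1 := by
  constructor
  · intro h; exact ⟨h 0, h 1⟩
  · rintro ⟨h1, h2⟩ i; fin_cases i <;> simpa

lemma interImageSome {α : Type*} [DecidableEq α] (e : Finset (Option α)) (S : Finset α)
    (h : none ∉ e) : (e ∩ S.image some).card = (e.eraseNone ∩ S).card := by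
  rw [show e ∩ S.image some = (e.eraseNone ∩ S).image some from ?_,
    Finset.card_image_of_injective _ (Option.some_injective α)]
  ext o
  cases o with
  | none => simp [h]
  | some a => simp [Finset.mem_eraseNone]

lemma interImageSome' {α : Type*} [DecidableEq α] (e : Finset (Option α)) (S : Finset α) :
    e ∩ S.image some = (e.eraseNone ∩ S).image some := by
  ext o
  cases o with
  | none => simp
  | some a => simp [Finset.mem_eraseNone]

lemma cardInterImageSome {α : Type*} [DecidableEq α] (e : Finset (Option α)) (S : Finset α) :
    (e ∩ S.image some).card = (e.eraseNone ∩ S).card := by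
  rw [interImageSome', Finset.card_image_of_injective _ (Option.some_injective α)]

lemma edgeOptOfNotNone {α : Type*} [DecidableEq α] (A B C : Finset α)
    (e : Finset (Option α)) (h : none ∉ e) :
    IsEdge ![A.image some, B.image some, insert none (C.image some)] e ↔
      IsEdge ![A, B, C] e.eraseNone := by
  rw [isEdge3, isEdge3, Finset.inter_insert_of_notMem h,
    cardInterImageSome e A, cardInterImageSome e B, cardInterImageSome e C]

lemma eraseNoneCard {α : Type*} [DecidableEq α] (e : Finset (Option α)) (h : none ∈ e) :
    e.card = e.eraseNone.card + 1 := by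
  have he : e = insert none (e.eraseNone.image some) := by
    ext o; cases o <;> simp [Finset.mem_eraseNone, h]
  nth_rewrite 1 [he]
  rw [Finset.card_insert_of_notMem (by simp),
    Finset.card_image_of_injective _ (Option.some_injective α)]

lemma edgeOptOfNone {α : Type*} [Fintype α] [DecidableEq α] (A B C : Finset α)
    (hpart : A ∪ B ∪ C = Finset.univ) (hAB : Disjoint A B) (hAC : Disjoint A C)
    (hBC : Disjoint B C) (e : Finset (Option α)) (h : none ∈ e) (hcard : e.card = 3) :
    IsEdge ![A.image some, B.image some, insert none (C.image some)] e ↔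
      IsEdge ![A, B] e.eraseNone := by
  set t := e.eraseNone with ht
  have ht2 : t.card = 2 := by have h3 := eraseNoneCard e h; rw [← ht] at h3; omega
  have hsplit : t.card = (t ∩ A).card + (t ∩ B).card + (t ∩ C).card := by
    have h1 : t = (t ∩ A) ∪ (t ∩ B) ∪ (t ∩ C) := by
      rw [← Finset.inter_union_distrib_left, ← Finset.inter_union_distrib_left, hpart,
        Finset.inter_univ]
    have dAB : Disjoint (t ∩ A) (t ∩ B) :=
      hAB.mono Finset.inter_subset_right Finset.inter_subset_right
    have dABC : Disjoint (t ∩ A ∪ t ∩ B) (t ∩ C) :=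
      Finset.disjoint_union_left.2
        ⟨hAC.mono Finset.inter_subset_right Finset.inter_subset_right,
         hBC.mono Finset.inter_subset_right Finset.inter_subset_right⟩
    conv_lhs => rw [h1]
    rw [Finset.card_union_of_disjoint dABC, Finset.card_union_of_disjoint dAB]
  have hC : (e ∩ insert none (C.image some)).card = (t ∩ C).card + 1 := by
    rw [Finset.inter_insert_of_mem h, Finset.card_insert_of_notMem (by simp),
      cardInterImageSome]
  rw [isEdge3, isEdge2, cardInterImageSome e A, cardInterImageSome e B, hC, ← ht]
  constructor
  · rintro ⟨h1, h2, h3⟩; exact ⟨h1, h2⟩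
  · rintro ⟨h1, h2⟩; exact ⟨h1, h2, by omega⟩

lemma oddCoverOption (k : ℕ)
    (A B C : Fin (4 * k) → Finset (Fin (8 * k)))
    (hpart : ∀ j, A j ∪ B j ∪ C j = Finset.univ)
    (hAB : ∀ j, Disjoint (A j) (B j)) (hAC : ∀ j, Disjoint (A j) (C j))
    (hBC : ∀ j, Disjoint (B j) (C j))
    (hcov2 : ∀ e : Finset (Fin (8 * k)), e.card = 2 →
      Odd ((Finset.univ.filter fun j => IsEdge ![A j, B j] e).card))
    (hcov3 : ∀ e : Finset (Fin (8 * k)), e.card = 3 →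
      Odd ((Finset.univ.filter fun j => IsEdge ![A j, B j, C j] e).card)) :
    ∀ e : Finset (Option (Fin (8 * k))), e.card = 3 →
      Odd ((Finset.univ.filter fun j : Fin (4 * k) =>
        IsEdge ![(A j).image some, (B j).image some,
                 insert none ((C j).image some)] e).card) := by
  intro e he
  by_cases hn : none ∈ e
  · have h2 : e.eraseNone.card = 2 := by have := eraseNoneCard e hn; omega
    have := hcov2 _ h2
    rwa [show (Finset.univ.filter fun j => IsEdge ![A j, B j] e.eraseNone) =
        Finset.univ.filter fun j : Fin (4 * k) =>
          IsEdge ![(A j).image some, (B j).image some,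
                   insert none ((C j).image some)] e from
      Finset.filter_congr fun j _ => by
        rw [edgeOptOfNone (A j) (B j) (C j) (hpart j) (hAB j) (hAC j) (hBC j) e hn he]] at this
  · have h3 : e.eraseNone.card = 3 := by
      have he' : e = e.eraseNone.image some := by
        ext o; cases o <;> simp [Finset.mem_eraseNone, hn]
      rw [he', Finset.card_image_of_injective _ (Option.some_injective _)] at he
      exact he
    have := hcov3 _ h3
    rwa [show (Finset.univ.filter fun j => IsEdge ![A j, B j, C j] e.eraseNone) =
        Finset.univ.filter fun j : Fin (4 * k) =>
          IsEdge ![(A j).image some, (B j).image some,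
                   insert none ((C j).image some)] e from
      Finset.filter_congr fun j _ => by
        rw [edgeOptOfNotNone (A j) (B j) (C j) e hn]] at this

lemma card3 {α : Type*} [DecidableEq α] (a b c : α) (S : Finset α)
    (hab : a ≠ b) (hac : a ≠ c) (hbc : b ≠ c) :
    (({a,b,c} : Finset α) ∩ S).card =
      (if a ∈ S then 1 else 0) + (if b ∈ S then 1 else 0) + (if c ∈ S then 1 else 0) := by
  classical
  rw [← Finset.filter_mem_eq_inter]
  simp only [Finset.filter_insert, Finset.filter_singleton]
  split_ifs <;> simp [Finset.card_insert_of_notMem, hab, hac, hbc]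

lemma tripleIff {α : Type*} [DecidableEq α] (Q0 Q1 Q2 : Finset α) (x y v : α)
    (hxy : x ≠ y) (hxv : x ≠ v) (hyv : y ≠ v)
    (d01 : Disjoint Q0 Q1) (d02 : Disjoint Q0 Q2) (d12 : Disjoint Q1 Q2)
    (hv : v ∈ Q0) :
    ((({x,y,v} : Finset α) ∩ Q0).card = 1 ∧ (({x,y,v} : Finset α) ∩ Q1).card = 1 ∧
      (({x,y,v} : Finset α) ∩ Q2).card = 1) ↔
      ((x ∈ Q1 ∧ y ∈ Q2) ∨ (x ∈ Q2 ∧ y ∈ Q1)) := by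
  rw [card3 x y v _ hxy hxv hyv, card3 x y v _ hxy hxv hyv, card3 x y v _ hxy hxv hyv]
  have hv1 : v ∉ Q1 := Finset.disjoint_left.1 d01 hv
  have hv2 : v ∉ Q2 := Finset.disjoint_left.1 d02 hv
  have hx01 : x ∈ Q0 → x ∉ Q1 := fun h => Finset.disjoint_left.1 d01 h
  have hx02 : x ∈ Q0 → x ∉ Q2 := fun h => Finset.disjoint_left.1 d02 h
  have hx12 : x ∈ Q1 → x ∉ Q2 := fun h => Finset.disjoint_left.1 d12 h
  have hy01 : y ∈ Q0 → y ∉ Q1 := fun h => Finset.disjoint_left.1 d01 h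
  have hy02 : y ∈ Q0 → y ∉ Q2 := fun h => Finset.disjoint_left.1 d02 h
  have hy12 : y ∈ Q1 → y ∉ Q2 := fun h => Finset.disjoint_left.1 d12 h
  by_cases hx0 : x ∈ Q0 <;> by_cases hx1 : x ∈ Q1 <;> by_cases hx2 : x ∈ Q2 <;>
    by_cases hy0 : y ∈ Q0 <;> by_cases hy1 : y ∈ Q1 <;> by_cases hy2 : y ∈ Q2 <;>
    simp_all

lemma tripleNone {α : Type*} [DecidableEq α] (Q0 Q1 Q2 : Finset α) (x y v : α)
    (hxy : x ≠ y) (hxv : x ≠ v) (hyv : y ≠ v)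
    (d01 : Disjoint Q0 Q1) (d02 : Disjoint Q0 Q2) (d12 : Disjoint Q1 Q2)
    (hv0 : v ∉ Q0) (hv1 : v ∉ Q1) (hv2 : v ∉ Q2) :
    ¬((({x,y,v} : Finset α) ∩ Q0).card = 1 ∧ (({x,y,v} : Finset α) ∩ Q1).card = 1 ∧
      (({x,y,v} : Finset α) ∩ Q2).card = 1) := by
  rw [card3 x y v _ hxy hxv hyv, card3 x y v _ hxy hxv hyv, card3 x y v _ hxy hxv hyv]
  have hx01 : x ∈ Q0 → x ∉ Q1 := fun h => Finset.disjoint_left.1 d01 h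
  have hx02 : x ∈ Q0 → x ∉ Q2 := fun h => Finset.disjoint_left.1 d02 h
  have hx12 : x ∈ Q1 → x ∉ Q2 := fun h => Finset.disjoint_left.1 d12 h
  have hy01 : y ∈ Q0 → y ∉ Q1 := fun h => Finset.disjoint_left.1 d01 h
  have hy02 : y ∈ Q0 → y ∉ Q2 := fun h => Finset.disjoint_left.1 d02 h
  have hy12 : y ∈ Q1 → y ∉ Q2 := fun h => Finset.disjoint_left.1 d12 h
  by_cases hx0 : x ∈ Q0 <;> by_cases hx1 : x ∈ Q1 <;> by_cases hx2 : x ∈ Q2 <;>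
    by_cases hy0 : y ∈ Q0 <;> by_cases hy1 : y ∈ Q1 <;> by_cases hy2 : y ∈ Q2 <;>
    simp_all

lemma isEdge3' {α : Type*} [DecidableEq α] (P : Fin 3 → Finset α) (e : Finset α) :
    IsEdge P e ↔ (e ∩ P 0).card = 1 ∧ (e ∩ P 1).card = 1 ∧ (e ∩ P 2).card = 1 := by
  constructor
  · intro h; exact ⟨h 0, h 1, h 2⟩
  · rintro ⟨h1, h2, h3⟩ i; fin_cases i; exacts [h1, h2, h3]

def indZ {N : ℕ} (S : Finset (Fin (N + 1))) : Fin N → ZMod 2 :=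
  fun x => if x.castSucc ∈ S then 1 else 0

def aFun {N : ℕ} (P : Fin 3 → Finset (Fin (N + 1))) : Fin N → ZMod 2 :=
  if Fin.last N ∈ P 0 then indZ (P 1) else if Fin.last N ∈ P 1 then indZ (P 0)
  else if Fin.last N ∈ P 2 then indZ (P 0) else 0

def bFun {N : ℕ} (P : Fin 3 → Finset (Fin (N + 1))) : Fin N → ZMod 2 :=
  if Fin.last N ∈ P 0 then indZ (P 2) else if Fin.last N ∈ P 1 then indZ (P 2)
  else if Fin.last N ∈ P 2 then indZ (P 1) else 0

lemma keyPoint {N : ℕ} (P : Fin 3 → Finset (Fin (N + 1)))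
    (hd : Pairwise (Function.onFun Disjoint P)) (x y : Fin N) (hxy : x ≠ y) :
    (if IsEdge P ({x.castSucc, y.castSucc, Fin.last N} : Finset (Fin (N + 1))) then (1 : ZMod 2)
      else 0) = aFun P x * bFun P y + bFun P x * aFun P y := by
  have hxy' : x.castSucc ≠ y.castSucc := fun h => hxy (Fin.castSucc_injective _ h)
  have hxv : x.castSucc ≠ Fin.last N := (Fin.castSucc_lt_last x).ne
  have hyv : y.castSucc ≠ Fin.last N := (Fin.castSucc_lt_last y).ne
  have d01 : Disjoint (P 0) (P 1) := hd (by decide)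
  have d02 : Disjoint (P 0) (P 2) := hd (by decide)
  have d12 : Disjoint (P 1) (P 2) := hd (by decide)
  simp only [isEdge3']
  by_cases hv0 : Fin.last N ∈ P 0
  · simp only [tripleIff _ _ _ _ _ _ hxy' hxv hyv d01 d02 d12 hv0]
    simp only [aFun, bFun, if_pos hv0, indZ]
    have e12 : x.castSucc ∈ P 1 → x.castSucc ∉ P 2 := fun h => Finset.disjoint_left.1 d12 h
    have f12 : y.castSucc ∈ P 1 → y.castSucc ∉ P 2 := fun h => Finset.disjoint_left.1 d12 h
    by_cases p1 : x.castSucc ∈ P 1 <;> by_cases p2 : y.castSucc ∈ P 2 <;>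
      by_cases p3 : x.castSucc ∈ P 2 <;> by_cases p4 : y.castSucc ∈ P 1 <;> simp_all
  · by_cases hv1 : Fin.last N ∈ P 1
    · simp only [show ((({x.castSucc, y.castSucc, Fin.last N} : Finset (Fin (N+1))) ∩ P 0).card = 1 ∧
          (({x.castSucc, y.castSucc, Fin.last N} : Finset (Fin (N+1))) ∩ P 1).card = 1 ∧
          (({x.castSucc, y.castSucc, Fin.last N} : Finset (Fin (N+1))) ∩ P 2).card = 1) =
          ((({x.castSucc, y.castSucc, Fin.last N} : Finset (Fin (N+1))) ∩ P 1).card = 1 ∧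
          (({x.castSucc, y.castSucc, Fin.last N} : Finset (Fin (N+1))) ∩ P 0).card = 1 ∧
          (({x.castSucc, y.castSucc, Fin.last N} : Finset (Fin (N+1))) ∩ P 2).card = 1) from
        propext (by tauto),
        tripleIff _ _ _ _ _ _ hxy' hxv hyv d01.symm d12 d02 hv1]
      simp only [aFun, bFun, if_neg hv0, if_pos hv1, indZ]
      have e12 : x.castSucc ∈ P 0 → x.castSucc ∉ P 2 := fun h => Finset.disjoint_left.1 d02 h
      have f12 : y.castSucc ∈ P 0 → y.castSucc ∉ P 2 := fun h => Finset.disjoint_left.1 d02 h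
      by_cases p1 : x.castSucc ∈ P 0 <;> by_cases p2 : y.castSucc ∈ P 2 <;>
        by_cases p3 : x.castSucc ∈ P 2 <;> by_cases p4 : y.castSucc ∈ P 0 <;> simp_all
    · by_cases hv2 : Fin.last N ∈ P 2
      · simp only [show ((({x.castSucc, y.castSucc, Fin.last N} : Finset (Fin (N+1))) ∩ P 0).card = 1 ∧
            (({x.castSucc, y.castSucc, Fin.last N} : Finset (Fin (N+1))) ∩ P 1).card = 1 ∧
            (({x.castSucc, y.castSucc, Fin.last N} : Finset (Fin (N+1))) ∩ P 2).card = 1) =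
            ((({x.castSucc, y.castSucc, Fin.last N} : Finset (Fin (N+1))) ∩ P 2).card = 1 ∧
            (({x.castSucc, y.castSucc, Fin.last N} : Finset (Fin (N+1))) ∩ P 0).card = 1 ∧
            (({x.castSucc, y.castSucc, Fin.last N} : Finset (Fin (N+1))) ∩ P 1).card = 1) from
          propext (by tauto),
          tripleIff _ _ _ _ _ _ hxy' hxv hyv d02.symm d12.symm d01 hv2]
        simp only [aFun, bFun, if_neg hv0, if_neg hv1, if_pos hv2, indZ]
        have e12 : x.castSucc ∈ P 0 → x.castSucc ∉ P 1 := fun h => Finset.disjoint_left.1 d01 h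
        have f12 : y.castSucc ∈ P 0 → y.castSucc ∉ P 1 := fun h => Finset.disjoint_left.1 d01 h
        by_cases p1 : x.castSucc ∈ P 0 <;> by_cases p2 : y.castSucc ∈ P 1 <;>
          by_cases p3 : x.castSucc ∈ P 1 <;> by_cases p4 : y.castSucc ∈ P 0 <;> simp_all
      · rw [if_neg (tripleNone _ _ _ _ _ _ hxy' hxv hyv d01 d02 d12 hv0 hv1 hv2)]
        simp [aFun, bFun, if_neg hv0, if_neg hv1, if_neg hv2]

lemma myRankAddLe {K : Type*} [Field K] {m n : Type*} [Fintype m] [Fintype n]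
    (A B : Matrix m n K) : (A + B).rank ≤ A.rank + B.rank := by
  classical
  rw [Matrix.rank, Matrix.rank, Matrix.rank, Matrix.mulVecLin_add]
  have hle : LinearMap.range (A.mulVecLin + B.mulVecLin) ≤
      LinearMap.range A.mulVecLin ⊔ LinearMap.range B.mulVecLin := by
    rintro x ⟨y, rfl⟩
    exact Submodule.add_mem_sup ⟨y, rfl⟩ ⟨y, rfl⟩
  exact le_trans (Submodule.finrank_mono hle)
    (Submodule.finrank_add_le_finrank_add_finrank _ _)

lemma myRankVecMulVecLe {K : Type*} [Field K] {m n : Type*} [Fintype m] [Fintype n]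
    (w : m → K) (v : n → K) : (Matrix.vecMulVec w v).rank ≤ 1 := by
  classical
  rw [Matrix.vecMulVec_eq Unit]
  refine le_trans (Matrix.rank_mul_le_left _ _) ?_
  simpa using Matrix.rank_le_card_width (Matrix.replicateCol Unit w)

lemma myRankSumLe {K : Type*} [Field K] {m n : Type*} [Fintype m] [Fintype n]
    {ι : Type*} (s : Finset ι) (f : ι → Matrix m n K) :
    (∑ i ∈ s, f i).rank ≤ ∑ i ∈ s, (f i).rank := by
  classical
  induction s using Finset.cons_induction with
  | empty => simp
  | cons a s ha ih =>
    rw [Finset.sum_cons, Finset.sum_cons]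
    exact le_trans (myRankAddLe _ _) (by omega)

lemma myRankUnit {K : Type*} [Field K] {n : Type*} [Fintype n] [DecidableEq n]
    (A : Matrix n n K) (h : A * A = 1) : A.rank = Fintype.card n :=
  Matrix.rank_of_isUnit A ⟨⟨A, A, h, h⟩, rfl⟩

lemma lowerBound (k : ℕ) (hk : 1 ≤ k) (m : ℕ)
    (H : Fin m → Fin 3 → Finset (Fin (8 * k + 1)))
    (hc : IsOddCoverOn Finset.univ H) : 4 * k ≤ m := by
  obtain ⟨-, hdisj, hcov⟩ := hc
  set N : Matrix (Fin (8 * k)) (Fin (8 * k)) (ZMod 2) :=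
    Matrix.of (fun x y => if x = y then 0 else 1) with hN
  set M : Matrix (Fin (8 * k)) (Fin (8 * k)) (ZMod 2) :=
    ∑ i : Fin m, (Matrix.vecMulVec (aFun (H i)) (bFun (H i)) +
      Matrix.vecMulVec (bFun (H i)) (aFun (H i))) with hM
  have hMN : M = N := by
    ext x y
    by_cases hxy : x = y
    · subst hxy
      rw [hM, hN]
      simp only [Matrix.sum_apply, Matrix.add_apply, Matrix.vecMulVec_apply, Matrix.of_apply]
      refine Eq.trans (Finset.sum_eq_zero fun i _ => ?_) (by simp)
      rw [mul_comm (bFun (H i) x)]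
      exact CharTwo.add_self_eq_zero _
    · have hxy' : x.castSucc ≠ y.castSucc := fun h => hxy (Fin.castSucc_injective _ h)
      have hxv : x.castSucc ≠ Fin.last (8 * k) := (Fin.castSucc_lt_last x).ne
      have hyv : y.castSucc ≠ Fin.last (8 * k) := (Fin.castSucc_lt_last y).ne
      have he3 : ({x.castSucc, y.castSucc, Fin.last (8 * k)} :
          Finset (Fin (8 * k + 1))).card = 3 := by
        rw [Finset.card_insert_of_notMem (by simp [hxy', hxv]),
          Finset.card_insert_of_notMem (by simp [hyv]), Finset.card_singleton]
      have hodd := hcov _ (Finset.subset_univ _) he3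
      have : M x y = ((Finset.univ.filter fun i =>
          IsEdge (H i) ({x.castSucc, y.castSucc, Fin.last (8 * k)} :
            Finset (Fin (8 * k + 1)))).card : ZMod 2) := by
        rw [hM]
        simp only [Matrix.sum_apply, Matrix.add_apply, Matrix.vecMulVec_apply]
        rw [← Finset.sum_boole]
        exact Finset.sum_congr rfl fun i _ => (keyPoint (H i) (hdisj i) x y hxy).symm
      rw [this, hN]
      rw [← ZMod.natCast_mod, Nat.odd_iff.1 hodd]
      simp [hxy]
  have hN2 : N * N = 1 := by
    ext x y
    rw [Matrix.mul_apply, hN]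
    simp only [Matrix.of_apply]
    have : ∀ z : Fin (8 * k), (if x = z then (0 : ZMod 2) else 1) * (if z = y then 0 else 1) =
        if ¬(z = x ∨ z = y) then 1 else 0 := by
      intro z
      by_cases h1 : x = z
      · subst h1; simp
      · by_cases h2 : z = y
        · subst h2; simp [h1]
        · simp [h2, h1, show ¬z = x from fun h => h1 h.symm]
    rw [Finset.sum_congr rfl fun z _ => this z, Finset.sum_boole]
    have hfil : (Finset.univ.filter fun z : Fin (8 * k) => ¬(z = x ∨ z = y)) =
        Finset.univ \ {x, y} := by
      ext z; simp [not_or]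
    rw [hfil, Finset.card_sdiff_of_subset (Finset.subset_univ _)]
    by_cases hxy : x = y
    · subst hxy
      rw [show ({x, x} : Finset (Fin (8 * k))).card = 1 by simp]
      simp only [Finset.card_univ, Fintype.card_fin]
      rw [← ZMod.natCast_mod, show (8 * k - 1) % 2 = 1 by omega]
      simp [Matrix.one_apply]
    · rw [show ({x, y} : Finset (Fin (8 * k))).card = 2 by
        rw [Finset.card_insert_of_notMem (by simp [hxy]), Finset.card_singleton]]
      simp only [Finset.card_univ, Fintype.card_fin]
      rw [← ZMod.natCast_mod, show (8 * k - 2) % 2 = 0 by omega]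
      simp [Matrix.one_apply, hxy]
  have hrankN : N.rank = 8 * k := by
    rw [myRankUnit N hN2, Fintype.card_fin]
  have hrankM : M.rank ≤ 2 * m := by
    refine le_trans (myRankSumLe Finset.univ _) ?_
    refine le_trans (Finset.sum_le_sum (fun i _ => le_trans (myRankAddLe _ _)
      (add_le_add (myRankVecMulVecLe _ _) (myRankVecMulVecLe _ _)))) ?_
    simp [mul_comm]
  rw [hMN, hrankN] at hrankM
  omega

lemma cardInterMapEquiv {α β : Type*} [DecidableEq α] [DecidableEq β] (φ : α ≃ β)
    (e : Finset β) (s : Finset α) :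
    (e ∩ s.map φ.toEmbedding).card = (e.map φ.symm.toEmbedding ∩ s).card := by
  rw [show e ∩ s.map φ.toEmbedding = ((e.map φ.symm.toEmbedding) ∩ s).map φ.toEmbedding from ?_,
    Finset.card_map]
  ext b
  simp only [Finset.mem_inter, Finset.mem_map, Equiv.toEmbedding_apply]
  constructor
  · rintro ⟨hb, a, ha, rfl⟩
    exact ⟨a, ⟨⟨φ a, hb, by simp⟩, ha⟩, rfl⟩
  · rintro ⟨a, ⟨⟨b', hb', rfl⟩, ha⟩, rfl⟩
    exact ⟨by simpa using hb', φ.symm b', ha, rfl⟩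

/-- If the tripartitions `(A_j, B_j, C_j)` of the `8k` vertices are such that the `(A_j, B_j)`
odd-cover `K_{8k}` and the triples cover each 3-set oddly, then adding a new vertex `v` to the
parts `C_j` yields an odd cover of `K_{8k+1}^{(3)}`; in particular `b_3(8k+1) = 4k`. -/
theorem stmt10 (k : ℕ) (hk : 1 ≤ k)
    (A B C : Fin (4 * k) → Finset (Fin (8 * k)))
    (hpart : ∀ j, A j ∪ B j ∪ C j = Finset.univ)
    (hAB : ∀ j, Disjoint (A j) (B j)) (hAC : ∀ j, Disjoint (A j) (C j))
    (hBC : ∀ j, Disjoint (B j) (C j))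
    (hcov2 : ∀ e : Finset (Fin (8 * k)), e.card = 2 →
      Odd ((Finset.univ.filter fun j => IsEdge ![A j, B j] e).card))
    (hcov3 : ∀ e : Finset (Fin (8 * k)), e.card = 3 →
      Odd ((Finset.univ.filter fun j => IsEdge ![A j, B j, C j] e).card)) :
    (∀ e : Finset (Option (Fin (8 * k))), e.card = 3 →
      Odd ((Finset.univ.filter fun j : Fin (4 * k) =>
        IsEdge ![(A j).image some, (B j).image some,
                 insert none ((C j).image some)] e).card)) ∧
    oddCoverNumber 3 (8 * k + 1) = 4 * k := by
  have hopt := oddCoverOption k A B C hpart hAB hAC hBC hcov2 hcov3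
  refine ⟨hopt, ?_⟩
  have φ : Option (Fin (8 * k)) ≃ Fin (8 * k + 1) := (finSuccEquiv (8 * k)).symm
  set Popt : Fin (4 * k) → Fin 3 → Finset (Option (Fin (8 * k))) := fun j =>
    ![(A j).image some, (B j).image some, insert none ((C j).image some)] with hPopt
  set Hnew : Fin (4 * k) → Fin 3 → Finset (Fin (8 * k + 1)) :=
    fun j p => (Popt j p).map φ.toEmbedding with hHnew
  have hmem : 4 * k ∈ {m | ∃ H : Fin m → Fin 3 → Finset (Fin (8 * k + 1)),
      IsOddCoverOn Finset.univ H} := by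
    refine ⟨Hnew, fun i j => Finset.subset_univ _, ?_, ?_⟩
    · intro j
      have h01 : Disjoint ((A j).image some) ((B j).image some) := by
        rw [Finset.disjoint_left]
        rintro o ho hb
        obtain ⟨x, hx, rfl⟩ := Finset.mem_image.1 ho
        obtain ⟨y, hy, hxy⟩ := Finset.mem_image.1 hb
        have := Option.some_injective _ hxy
        subst this
        exact Finset.disjoint_left.1 (hAB j) hx hy
      have h02 : Disjoint ((A j).image some) (insert none ((C j).image some)) := by
        rw [Finset.disjoint_right]
        rintro o ho ha
        obtain ⟨x, hx, rfl⟩ := Finset.mem_image.1 ha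
        rcases Finset.mem_insert.1 ho with h | h
        · exact absurd h (Option.some_ne_none x)
        · obtain ⟨y, hy, hxy⟩ := Finset.mem_image.1 h
          have := Option.some_injective _ hxy
          subst this
          exact Finset.disjoint_left.1 (hAC j) hx hy
      have h12 : Disjoint ((B j).image some) (insert none ((C j).image some)) := by
        rw [Finset.disjoint_right]
        rintro o ho hb
        obtain ⟨x, hx, rfl⟩ := Finset.mem_image.1 hb
        rcases Finset.mem_insert.1 ho with h | h
        · exact absurd h (Option.some_ne_none x)
        · obtain ⟨y, hy, hxy⟩ := Finset.mem_image.1 h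
          have := Option.some_injective _ hxy
          subst this
          exact Finset.disjoint_left.1 (hBC j) hx hy
      have pd : Pairwise (Function.onFun Disjoint (Popt j)) := by
        intro p q hpq
        fin_cases p <;> fin_cases q <;>
          first
            | exact absurd rfl hpq
            | exact h01
            | exact h02
            | exact h12
            | exact h01.symm
            | exact h02.symm
            | exact h12.symm
      intro p q hpq
      exact (Finset.disjoint_map _).2 (pd hpq)
    · intro e _ hcard
      have hcard' : (e.map φ.symm.toEmbedding).card = 3 := by
        rw [Finset.card_map]; exact hcard
      have hod := hopt _ hcard'
      rwa [show (Finset.univ.filter fun j : Fin (4 * k) =>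
          IsEdge ![(A j).image some, (B j).image some,
            insert none ((C j).image some)] (e.map φ.symm.toEmbedding)) =
          Finset.univ.filter (fun j => IsEdge (Hnew j) e) from
        Finset.filter_congr fun j _ => ?_] at hod
      show IsEdge (Popt j) (e.map φ.symm.toEmbedding) ↔ IsEdge (Hnew j) e
      exact (forall_congr' fun p => by
        rw [show Hnew j p = (Popt j p).map φ.toEmbedding from rfl,
          cardInterMapEquiv φ e (Popt j p)]).symm
  rw [oddCoverNumber]
  refine le_antisymm (Nat.sInf_le hmem) (le_csInf ⟨4 * k, hmem⟩ ?_)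
  rintro m ⟨H, hH⟩
  exact lowerBound k hk m H hH
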